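/- arXiv:1805.06098 — 3 statements merged into one kernel-verified Lean document; each statement's English description precedes it below -/
import Mathlib

section
/- Let H be a real Hilbert space, let ϕ : ℝ → (−∞,∞] be an even, proper, lower semicontinuous, convex function, set φ = ϕ∘‖·‖ : H → (−∞,∞], let γ > 0, σ ∈ ℝ, and x ∈ H, and set R = {(χ,ν) ∈ ℝ² : χ + ϕ*(ν) ≤ 0}. Then R is a nonempty closed convex subset of ℝ², and if σ + γ ϕ*(‖x‖/γ) ≤ 0 then prox_{γφ̃}(σ,x) = (0,0). -/
open scoped RealInnerProductSpace

noncomputable section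

/-- The Fenchel conjugate of an extended-real-valued function on a real inner
product space: `φ*(u) = sup_x (⟪x, u⟫ - φ x)`. -/
def eConj {H : Type*} [NormedAddCommGroup H] [InnerProductSpace ℝ H]
    (φ : H → EReal) (u : H) : EReal :=
  ⨆ x : H, (((⟪x, u⟫ : ℝ) : EReal) - φ x)

/-- The recession function of `φ`: `(rec φ)(x) = sup_{y ∈ dom φ} (φ(x+y) - φ(y))`. -/
def eRec {H : Type*} [NormedAddCommGroup H] (φ : H → EReal) (x : H) : EReal :=
  ⨆ y : {y : H // φ y ≠ ⊤}, (φ (x + (y : H)) - φ (y : H))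

/-- The perspective of `φ`: `σ φ(x/σ)` for `σ > 0`, `(rec φ)(x)` for `σ = 0`,
and `+∞` for `σ < 0`. -/
def persp {H : Type*} [NormedAddCommGroup H] [NormedSpace ℝ H]
    (φ : H → EReal) (p : ℝ × H) : EReal :=
  if 0 < p.1 then (p.1 : EReal) * φ (p.1⁻¹ • p.2)
  else if p.1 = 0 then eRec φ p.2
  else ⊤

/-- `φ` is proper (nowhere `⊥` and not identically `⊤`), lower semicontinuous
and convex (convexity expressed via convexity of the epigraph). -/
def ProperLscConvex {H : Type*} [NormedAddCommGroup H] [NormedSpace ℝ H]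
    (φ : H → EReal) : Prop :=
  (∃ x, φ x ≠ ⊤) ∧ (∀ x, φ x ≠ ⊥) ∧ LowerSemicontinuous φ ∧
    Convex ℝ {p : H × ℝ | φ p.1 ≤ (p.2 : EReal)}

/-- `p` is the proximal point of `ψ : ℝ × H → (−∞,∞]` at `z`, i.e. `p` minimizes
`y ↦ ψ(y) + ½‖z − y‖²` (the squared norm on `ℝ × H` being the Hilbert one). -/
def IsProx {H : Type*} [NormedAddCommGroup H]
    (ψ : ℝ × H → EReal) (z p : ℝ × H) : Prop :=
  ∀ y : ℝ × H,
    ψ p + ((((z.1 - p.1) ^ 2 + ‖z.2 - p.2‖ ^ 2) / 2 : ℝ) : EReal) ≤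
      ψ y + ((((z.1 - y.1) ^ 2 + ‖z.2 - y.2‖ ^ 2) / 2 : ℝ) : EReal)

/-!
`R` is the intersection, over the points `ξ` of `dom ϕ`, of the closed half-planes
`χ + ξ ν ≤ ϕ ξ`; evenness and convexity put the minimum of `ϕ` at `0`, so `(ϕ 0, 0) ∈ R`.
For the prox, `φ* ≤ ϕ* ∘ ‖·‖` turns the hypothesis into `(σ/γ, x/γ) ∈ R_φ`, and any such point
is a linear minorant of the perspective: `μ χ + ⟪v, u⟫ ≤ φ̃(χ, v)` (through the Fenchel–Young
inequality for `χ > 0`, and through the recession function for `χ = 0`). Hence `(σ, x)` is a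
subgradient of `γ φ̃` at `(0, 0)`, where `γ φ̃` vanishes, which means that `(0, 0)` is the prox.
-/

lemma EReal.coe_add_le_zero_iff (a : ℝ) (b : EReal) : (a : EReal) + b ≤ 0 ↔ b ≤ (-a : ℝ) := by
  induction b using EReal.rec
  · simp
  · norm_cast
    constructor <;> intro <;> linarith
  · simp

lemma EReal.coe_sub_ne_bot (a : ℝ) {b : EReal} (hb : b ≠ ⊤) : (a : EReal) - b ≠ ⊥ := by
  induction b using EReal.rec
  · simp
  · exact EReal.coe_ne_bot _
  · simp at hb

lemma EReal.coe_div_add_le_zero {γ : ℝ} (hγ : 0 < γ) {σ : ℝ} {e : EReal}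
    (h : (σ : EReal) + γ * e ≤ 0) : ((σ / γ : ℝ) : EReal) + e ≤ 0 := by
  induction e using EReal.rec
  · simp
  · norm_cast at h ⊢
    rw [div_add' _ _ _ hγ.ne', div_nonpos_iff]
    right; constructor <;> nlinarith
  · simp [EReal.coe_mul_top_of_pos hγ] at h

lemma EReal.coe_sub_le_coe_iff (a c : ℝ) (b : EReal) :
    (a : EReal) - b ≤ c ↔ ((a - c : ℝ) : EReal) ≤ b := by
  induction b using EReal.rec
  · simp only [EReal.coe_sub_bot, top_le_iff, le_bot_iff, EReal.coe_ne_top, EReal.coe_ne_bot]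
  · norm_cast
    constructor <;> intro <;> linarith
  · simp

lemma apply_zero_le_of_even {E : Type*} [AddCommGroup E] [Module ℝ E] {φ : E → EReal}
    (heven : ∀ x, φ (-x) = φ x) (hconv : Convex ℝ {p : E × ℝ | φ p.1 ≤ p.2}) (x : E) :
    φ 0 ≤ φ x := by
  refine EReal.le_of_forall_lt_iff_le.1 fun t ht => ?_
  have hmid := hconv (x := (x, t)) (y := (-x, t)) ht.le (by simpa [heven] using ht.le)
    (by norm_num : (0 : ℝ) ≤ 1 / 2) (by norm_num : (0 : ℝ) ≤ 1 / 2) (by norm_num)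
  rwa [show (1 / 2 : ℝ) • (x, t) + (1 / 2 : ℝ) • (-x, t) = ((0 : E), t) from
    Prod.ext (by simp) (by simp only [Prod.snd_add, Prod.smul_snd, smul_eq_mul]; ring)] at hmid

section

variable {H : Type*} [NormedAddCommGroup H]

lemma eRec_zero {φ : H → EReal} (hdom : ∃ y, φ y ≠ ⊤) (hbot : ∀ y, φ y ≠ ⊥) : eRec φ 0 = 0 := by
  obtain ⟨y, hy⟩ := hdom
  refine le_antisymm (iSup_le fun _ => by simpa using EReal.sub_self_le_zero) ?_
  refine le_trans ?_ (le_iSup _ ⟨y, hy⟩)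
  simp [EReal.sub_self hy (hbot y)]

variable [InnerProductSpace ℝ H]

lemma inner_sub_le_eConj (φ : H → EReal) (u y : H) : ((⟪y, u⟫ : ℝ) : EReal) - φ y ≤ eConj φ u :=
  le_iSup (fun y => ((⟪y, u⟫ : ℝ) : EReal) - φ y) y

lemma eConj_ne_bot {φ : H → EReal} {y : H} (hy : φ y ≠ ⊤) (u : H) : eConj φ u ≠ ⊥ :=
  ne_bot_of_le_ne_bot (EReal.coe_sub_ne_bot _ hy) (inner_sub_le_eConj φ u y)

lemma eConj_comp_norm_le (ϕ : ℝ → EReal) (u : H) :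
    eConj (fun v : H => ϕ ‖v‖) u ≤ eConj ϕ ‖u‖ := by
  refine iSup_le fun v => le_trans ?_ (inner_sub_le_eConj ϕ ‖u‖ ‖v‖)
  refine EReal.sub_le_sub ?_ le_rfl
  simpa [mul_comm] using EReal.coe_le_coe_iff.2 (real_inner_le_norm v u)

lemma setOf_add_eConj_nonpos_eq_iInter {φ : H → EReal} (hbot : ∀ y, φ y ≠ ⊥) :
    {w : ℝ × H | (w.1 : EReal) + eConj φ w.2 ≤ 0} =
      ⋂ (y : H) (t : ℝ) (_ : φ y = t), {w : ℝ × H | w.1 + ⟪y, w.2⟫ ≤ t} := by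
  ext w
  simp only [Set.mem_ofPred_eq, Set.mem_iInter, EReal.coe_add_le_zero_iff, eConj, iSup_le_iff]
  refine forall_congr' fun y => ?_
  induction h : φ y using EReal.rec
  · exact absurd h (hbot y)
  · norm_cast
    simp
  · simp

lemma isClosed_setOf_add_eConj_nonpos {φ : H → EReal} (hbot : ∀ y, φ y ≠ ⊥) :
    IsClosed {w : ℝ × H | (w.1 : EReal) + eConj φ w.2 ≤ 0} := by
  rw [setOf_add_eConj_nonpos_eq_iInter hbot]
  exact isClosed_iInter fun y => isClosed_iInter fun t => isClosed_iInter fun _ =>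
    isClosed_le (by fun_prop) continuous_const

lemma convex_setOf_add_eConj_nonpos {φ : H → EReal} (hbot : ∀ y, φ y ≠ ⊥) :
    Convex ℝ {w : ℝ × H | (w.1 : EReal) + eConj φ w.2 ≤ 0} := by
  rw [setOf_add_eConj_nonpos_eq_iInter hbot]
  exact convex_iInter fun y => convex_iInter fun t => convex_iInter fun _ =>
    convex_halfSpace_le
      (LinearMap.fst ℝ ℝ H + (innerₛₗ ℝ y).comp (LinearMap.snd ℝ ℝ H)).isLinear t

lemma inner_le_eRec {φ : H → EReal} (hbot : ∀ y, φ y ≠ ⊥) {u : H} (hu : eConj φ u ≠ ⊤)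
    (hu' : eConj φ u ≠ ⊥) (v : H) : ((⟪v, u⟫ : ℝ) : EReal) ≤ eRec φ v := by
  lift eConj φ u to ℝ using ⟨hu, hu'⟩ with c hc
  -- `y` nearly attains the supremum defining `φ* u`; Fenchel–Young at `v + y` does the rest.
  refine EReal.ge_of_forall_gt_iff_ge.1 fun z hz => ?_
  obtain ⟨y, hy⟩ : ∃ y, ((c - (⟪v, u⟫ - z) : ℝ) : EReal) < ⟪y, u⟫ - φ y := by
    refine lt_iSup_iff.1 (?_ : _ < eConj φ u)
    rw [← hc]
    exact_mod_cast (by linarith [EReal.coe_lt_coe_iff.1 hz] : c - (⟪v, u⟫ - z) < c)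
  induction hφy : φ y using EReal.rec with
  | bot => exact absurd hφy (hbot y)
  | top => simp [hφy] at hy
  | coe s =>
    rw [hφy] at hy
    have hvy := (EReal.coe_sub_le_coe_iff _ _ _).1 (hc ▸ inner_sub_le_eConj φ u (v + y))
    refine le_trans ?_ (le_iSup _ ⟨y, hφy ▸ EReal.coe_ne_top s⟩)
    calc (z : EReal) ≤ ((⟪v + y, u⟫ - c : ℝ) : EReal) - s := by
          rw [← EReal.coe_sub, EReal.coe_le_coe_iff, inner_add_left]
          rw [← EReal.coe_sub, EReal.coe_lt_coe_iff] at hy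
          linarith
      _ ≤ φ (v + y) - φ y := hφy ▸ EReal.sub_le_sub hvy le_rfl

lemma le_persp_of_add_eConj_nonpos {φ : H → EReal} (hdom : ∃ y, φ y ≠ ⊤) (hbot : ∀ y, φ y ≠ ⊥)
    {μ : ℝ} {u : H} (hμ : (μ : EReal) + eConj φ u ≤ 0) (χ : ℝ) (v : H) :
    ((μ * χ + ⟪v, u⟫ : ℝ) : EReal) ≤ persp φ (χ, v) := by
  rw [EReal.coe_add_le_zero_iff] at hμ
  unfold persp
  rcases lt_trichotomy χ 0 with hχ | rfl | hχ
  · simp [hχ.not_gt, hχ.ne]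
  · simpa using inner_le_eRec hbot (ne_top_of_le_ne_top (EReal.coe_ne_top _) hμ)
      (eConj_ne_bot hdom.choose_spec u) v
  · have hminorant : ((⟪χ⁻¹ • v, u⟫ + μ : ℝ) : EReal) ≤ φ (χ⁻¹ • v) := by
      simpa using (EReal.coe_sub_le_coe_iff _ _ _).1 ((inner_sub_le_eConj φ u _).trans hμ)
    simp only [hχ, if_true]
    calc ((μ * χ + ⟪v, u⟫ : ℝ) : EReal) = (χ : EReal) * ((⟪χ⁻¹ • v, u⟫ + μ : ℝ) : EReal) := by
          norm_cast
          rw [real_inner_smul_left]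
          field_simp
          ring
      _ ≤ _ := mul_le_mul_of_nonneg_left hminorant (by exact_mod_cast hχ.le)

lemma isProx_iff_eq_zero_of_inner_le {ψ : ℝ × H → EReal} {z : ℝ × H} (hψ0 : ψ 0 = 0)
    (hψ : ∀ q : ℝ × H, ((z.1 * q.1 + ⟪z.2, q.2⟫ : ℝ) : EReal) ≤ ψ q) (p : ℝ × H) :
    IsProx ψ z p ↔ p = 0 := by
  have hlower : ∀ q : ℝ × H,
      (((z.1 ^ 2 + ‖z.2‖ ^ 2) / 2 + (q.1 ^ 2 + ‖q.2‖ ^ 2) / 2 : ℝ) : EReal) ≤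
        ψ q + ((((z.1 - q.1) ^ 2 + ‖z.2 - q.2‖ ^ 2) / 2 : ℝ) : EReal) := by
    intro q
    refine le_trans (le_of_eq ?_) (add_le_add_left (hψ q) _)
    rw [← EReal.coe_add, norm_sub_sq_real]
    congr 1
    ring
  have hzero : ψ 0 + ((((z.1 - (0 : ℝ × H).1) ^ 2 + ‖z.2 - (0 : ℝ × H).2‖ ^ 2) / 2 : ℝ) : EReal) =
      (((z.1 ^ 2 + ‖z.2‖ ^ 2) / 2 : ℝ) : EReal) := by
    simp [hψ0]
  constructor
  · intro hp
    have hle := (hlower p).trans ((hp 0).trans hzero.le)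
    rw [EReal.coe_le_coe_iff] at hle
    have h1 : p.1 = 0 := by nlinarith [sq_nonneg p.1, sq_nonneg ‖p.2‖]
    have h2 : ‖p.2‖ = 0 := by nlinarith [sq_nonneg p.1, norm_nonneg p.2]
    exact Prod.ext h1 (norm_eq_zero.1 h2)
  · rintro rfl q
    refine hzero.le.trans (le_trans ?_ (hlower q))
    exact_mod_cast le_add_of_nonneg_right (by positivity)

end

theorem radial_perspective_prox_regionR_general
    {H : Type*} [NormedAddCommGroup H] [InnerProductSpace ℝ H]
    (ϕ : ℝ → EReal) (heven : ∀ ξ : ℝ, ϕ (-ξ) = ϕ ξ) (hϕ : ProperLscConvex ϕ)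
    (γ : ℝ) (hγ : 0 < γ) (σ : ℝ) (x : H) :
    ({w : ℝ × ℝ | (w.1 : EReal) + eConj ϕ w.2 ≤ 0}.Nonempty ∧
        IsClosed {w : ℝ × ℝ | (w.1 : EReal) + eConj ϕ w.2 ≤ 0} ∧
        Convex ℝ {w : ℝ × ℝ | (w.1 : EReal) + eConj ϕ w.2 ≤ 0}) ∧
      ((σ : EReal) + (γ : EReal) * eConj ϕ (‖x‖ / γ) ≤ 0 →
        ∀ p : ℝ × H,
          IsProx (fun q => (γ : EReal) * persp (fun v : H => ϕ ‖v‖) q) (σ, x) p ↔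
            p = (0, 0)) := by
  obtain ⟨⟨ξ₀, hξ₀⟩, hbot, -, hconv⟩ := hϕ
  have hmin : ∀ ξ, ϕ 0 ≤ ϕ ξ := apply_zero_le_of_even heven hconv
  have hϕ0 : ϕ 0 ≠ ⊤ := ne_top_of_le_ne_top hξ₀ (hmin ξ₀)
  refine ⟨⟨?_, isClosed_setOf_add_eConj_nonpos hbot, convex_setOf_add_eConj_nonpos hbot⟩,
    fun hσ p => ?_⟩
  · refine ⟨((ϕ 0).toReal, 0), ?_⟩
    rw [setOf_add_eConj_nonpos_eq_iInter hbot]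
    simp only [Set.mem_iInter]
    intro ξ t hξ
    simpa [← EReal.coe_le_coe_iff, EReal.coe_toReal hϕ0 (hbot 0), ← hξ] using hmin ξ
  · set φ : H → EReal := fun v => ϕ ‖v‖
    have hdom : ∃ v, φ v ≠ ⊤ := ⟨0, by simpa [φ] using hϕ0⟩
    have hconj : ((σ / γ : ℝ) : EReal) + eConj φ (γ⁻¹ • x) ≤ 0 := by
      refine (add_le_add_right (eConj_comp_norm_le ϕ _) _).trans
        (EReal.coe_div_add_le_zero hγ ?_)
      rwa [norm_smul, norm_inv, Real.norm_of_nonneg hγ.le, inv_mul_eq_div]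
    rw [Prod.mk_zero_zero]
    refine isProx_iff_eq_zero_of_inner_le ?_ (fun q => ?_) p
    · simp [persp, eRec_zero hdom (fun v => hbot _)]
    · calc ((σ * q.1 + ⟪x, q.2⟫ : ℝ) : EReal)
            = (γ : EReal) * ((σ / γ * q.1 + ⟪q.2, γ⁻¹ • x⟫ : ℝ) : EReal) := by
            norm_cast
            rw [real_inner_smul_right, real_inner_comm]
            field_simp
        _ ≤ _ := mul_le_mul_of_nonneg_left
            (le_persp_of_add_eConj_nonpos hdom (fun _ => hbot _) hconj q.1 q.2) (by positivity)

/-- For an even `ϕ ∈ Γ₀(ℝ)` and `φ = ϕ ∘ ‖·‖`, the set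
`R = {(χ,ν) : χ + ϕ*(ν) ≤ 0}` is nonempty closed convex, and if
`σ + γϕ*(‖x‖/γ) ≤ 0` then `prox_{γφ̃}(σ,x) = (0,0)`. -/
theorem radial_perspective_prox_regionR
    {H : Type*} [NormedAddCommGroup H] [InnerProductSpace ℝ H] [CompleteSpace H]
    (ϕ : ℝ → EReal) (heven : ∀ ξ : ℝ, ϕ (-ξ) = ϕ ξ) (hϕ : ProperLscConvex ϕ)
    (γ : ℝ) (hγ : 0 < γ) (σ : ℝ) (x : H) :
    ({w : ℝ × ℝ | (w.1 : EReal) + eConj ϕ w.2 ≤ 0}.Nonempty ∧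
        IsClosed {w : ℝ × ℝ | (w.1 : EReal) + eConj ϕ w.2 ≤ 0} ∧
        Convex ℝ {w : ℝ × ℝ | (w.1 : EReal) + eConj ϕ w.2 ≤ 0}) ∧
      ((σ : EReal) + (γ : EReal) * eConj ϕ (‖x‖ / γ) ≤ 0 →
        ∀ p : ℝ × H,
          IsProx (fun q => (γ : EReal) * persp (fun v : H => ϕ ‖v‖) q) (σ, x) p ↔
            p = (0, 0)) :=
  radial_perspective_prox_regionR_general ϕ heven hϕ γ hγ σ x
end
end

section
/- Let H be a real Hilbert space, let α > 0, γ > 0, ρ > 0, q > 1, set q* = q/(q−1), and let φ be the generalized Huber function φ(x) = α − ρ^{q*}/q* + ρ‖x‖ if ‖x‖ > ρ^{q*/q}, φ(x) = α + ‖x‖^q/q if ‖x‖ ≤ ρ^{q*/q}. Let σ ∈ ℝ and x ∈ H. If σ ≤ γ(α − ρ^{q*}/q*) and ‖x‖ > γρ, then prox_{γφ̃}(σ,x) = (0, (1 − γρ/‖x‖) x). -/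
/-!
At scale `0` the perspective is the recession function, which for the generalized Huber
function is `ρ ‖·‖`: its radial profile is `ρ`-Lipschitz and eventually affine of slope `ρ`.
At a positive scale `τ`, Young's inequality gives `φ ≥ (α - ρ^{q*}/q*) + ρ ‖·‖`, hence
`γ φ̃(τ, u) ≥ γ τ (α - ρ^{q*}/q*) + γ ρ ‖u‖`; when `σ ≤ γ (α - ρ^{q*}/q*)` the prox objective at
`(τ, u)` then exceeds its value at `(0, u)` by at least `τ² / 2`. On the slice `τ = 0` the
problem is the prox of `γ ρ ‖·‖`, whose unique solution is soft thresholding.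
-/

noncomputable section

/-- The perspective of a (finite-valued) function `φ : H → ℝ`: it equals
`σ φ(x/σ)` for `σ > 0`, the recession function
`(rec φ)(x) = sup_y (φ(x+y) − φ(y))` for `σ = 0`, and `+∞` for `σ < 0`. -/
def perspR {H : Type*} [NormedAddCommGroup H] [NormedSpace ℝ H]
    (φ : H → ℝ) (p : ℝ × H) : EReal :=
  if 0 < p.1 then ((p.1 * φ (p.1⁻¹ • p.2) : ℝ) : EReal)
  else if p.1 = 0 then ⨆ y : H, ((φ (p.2 + y) - φ y : ℝ) : EReal)
  else ⊤

section HuberProfile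

variable {α ρ q qs : ℝ}

def huberProfile (α ρ q qs s : ℝ) : ℝ :=
  if s ≤ ρ ^ (qs / q) then α + s ^ q / q else α - ρ ^ qs / qs + ρ * s

lemma huberThreshold_rpow_sub_one (hq : 1 < q) (hρ : 0 < ρ) (hqs : qs = q / (q - 1)) :
    (ρ ^ (qs / q)) ^ (q - 1) = ρ := by
  have hq₀ : q ≠ 0 := by positivity
  have hq₁ : q - 1 ≠ 0 := sub_ne_zero.2 hq.ne'
  rw [← Real.rpow_mul hρ.le, hqs, div_div_cancel_left' hq₀, inv_mul_cancel₀ hq₁, Real.rpow_one]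

lemma rpow_div_rpow_cancel (hq : q ≠ 0) (hρ : 0 ≤ ρ) : (ρ ^ (qs / q)) ^ q = ρ ^ qs := by
  rw [← Real.rpow_mul hρ, div_mul_cancel₀ _ hq]

/-- Beyond the threshold `r = ρ ^ (qs / q)`, where `s ^ (q - 1) = ρ`, the profile continues
`s ^ q / q` along its tangent line. -/
lemma huberProfile_eq_min (hq : 1 < q) (hρ : 0 < ρ) (hqs : qs = q / (q - 1)) (s : ℝ) :
    huberProfile α ρ q qs s =
      α + min s (ρ ^ (qs / q)) ^ q / q + ρ * (s - min s (ρ ^ (qs / q))) := by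
  unfold huberProfile
  split_ifs with hs
  · rw [min_eq_left hs]; ring
  · set r := ρ ^ (qs / q)
    have hr : 0 < r := by positivity
    have hq₀ : q ≠ 0 := by positivity
    have hρr : ρ * r = ρ ^ qs := by
      calc ρ * r = r ^ (q - 1) * r := by rw [huberThreshold_rpow_sub_one hq hρ hqs]
        _ = r ^ q := by rw [Real.rpow_sub_one hr.ne', div_mul_cancel₀ _ hr.ne']
        _ = ρ ^ qs := rpow_div_rpow_cancel hq₀ hρ.le
    have hqq : qs * (q - 1) = q := by
      rw [hqs, div_mul_cancel₀ _ (sub_ne_zero.2 hq.ne')]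
    have hqs₀ : qs ≠ 0 := by rintro rfl; exact hq₀ (by linarith)
    rw [min_eq_right (not_le.1 hs).le, rpow_div_rpow_cancel hq₀ hρ.le]
    field_simp
    linear_combination qs * q * hρr + ρ ^ qs * hqq

lemma rpow_div_sub_rpow_div_le {a b r : ℝ} (hq : 1 ≤ q) (ha : 0 ≤ a) (hab : a ≤ b) (hbr : b ≤ r) :
    b ^ q / q - a ^ q / q ≤ r ^ (q - 1) * (b - a) := by
  have hderiv : ∀ s, HasDerivAt (fun s : ℝ => s ^ q / q) (s ^ (q - 1)) s := fun s => by
    simpa [mul_div_cancel_left₀ _ (by positivity : q ≠ 0)] using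
      (Real.hasDerivAt_rpow_const (x := s) (Or.inr hq)).div_const q
  refine (convex_Icc 0 r).image_sub_le_mul_sub_of_deriv_le
    (fun s _ => (hderiv s).continuousAt.continuousWithinAt)
    (fun s _ => (hderiv s).differentiableAt.differentiableWithinAt) (fun s hs => ?_)
    a ⟨ha, hab.trans hbr⟩ b ⟨ha.trans hab, hbr⟩ hab
  rw [interior_Icc] at hs
  rw [(hderiv s).deriv]
  exact Real.rpow_le_rpow hs.1.le hs.2.le (by linarith)

lemma huberProfile_sub_mem_Icc (hq : 1 < q) (hρ : 0 < ρ) (hqs : qs = q / (q - 1)) {a b : ℝ}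
    (ha : 0 ≤ a) (hab : a ≤ b) :
    huberProfile α ρ q qs b - huberProfile α ρ q qs a ∈ Set.Icc 0 (ρ * (b - a)) := by
  simp only [huberProfile_eq_min hq hρ hqs]
  set r := ρ ^ (qs / q)
  have hr : 0 ≤ r := by positivity
  have hm : min a r ≤ min b r := min_le_min_right r hab
  have hm' : min b r - min a r ≤ b - a := by simp only [min_def]; split_ifs <;> linarith
  have hpow_mono : min a r ^ q / q ≤ min b r ^ q / q := by gcongr
  have hpow_lip := rpow_div_sub_rpow_div_le hq.le (le_min ha hr) hm (min_le_right b r)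
  rw [huberThreshold_rpow_sub_one hq hρ hqs] at hpow_lip
  have hslack := mul_nonneg hρ.le (sub_nonneg.2 hm')
  constructor <;> linarith

lemma abs_huberProfile_sub_le (hq : 1 < q) (hρ : 0 < ρ) (hqs : qs = q / (q - 1)) {a b : ℝ}
    (ha : 0 ≤ a) (hb : 0 ≤ b) :
    |huberProfile α ρ q qs a - huberProfile α ρ q qs b| ≤ ρ * |a - b| := by
  rcases le_total a b with hab | hba
  · obtain ⟨h₀, h₁⟩ := huberProfile_sub_mem_Icc (α := α) hq hρ hqs ha hab
    rwa [abs_sub_comm, abs_of_nonneg h₀, abs_sub_comm, abs_of_nonneg (sub_nonneg.2 hab)]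
  · obtain ⟨h₀, h₁⟩ := huberProfile_sub_mem_Icc (α := α) hq hρ hqs hb hba
    rwa [abs_of_nonneg h₀, abs_of_nonneg (sub_nonneg.2 hba)]

/-- Young's inequality `ρ s ≤ s ^ q / q + ρ ^ qs / qs`. -/
lemma affine_le_huberProfile (hq : 1 < q) (hρ : 0 < ρ) (hqs : qs = q / (q - 1)) {s : ℝ}
    (hs : 0 ≤ s) : α - ρ ^ qs / qs + ρ * s ≤ huberProfile α ρ q qs s := by
  unfold huberProfile
  split_ifs
  · have := Real.young_inequality_of_nonneg hs hρ.le
      ((Real.holderConjugate_iff_eq_conjExponent hq).2 hqs)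
    linarith
  · rfl

end HuberProfile

section Perspective

variable {E : Type*} [NormedAddCommGroup E] [NormedSpace ℝ E] {φ : E → ℝ}

lemma perspR_of_pos {τ : ℝ} (hτ : 0 < τ) (u : E) :
    perspR φ (τ, u) = ((τ * φ (τ⁻¹ • u) : ℝ) : EReal) :=
  if_pos hτ

lemma perspR_of_neg {τ : ℝ} (hτ : τ < 0) (u : E) : perspR φ (τ, u) = ⊤ := by
  rw [perspR, if_neg (not_lt.2 hτ.le), if_neg hτ.ne]

lemma perspR_zero_of_radial {g : ℝ → ℝ} {ρ c r : ℝ} (hφ : ∀ v, φ v = g ‖v‖) (hρ : 0 ≤ ρ)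
    (hlip : ∀ {a b}, 0 ≤ a → 0 ≤ b → |g a - g b| ≤ ρ * |a - b|)
    (haff : ∀ s, r < s → g s = c + ρ * s) (u : E) :
    perspR φ (0, u) = ((ρ * ‖u‖ : ℝ) : EReal) := by
  simp only [perspR, lt_irrefl, if_false, if_true, hφ]
  refine le_antisymm (iSup_le fun y => EReal.coe_le_coe_iff.2 ?_) ?_
  · calc g ‖u + y‖ - g ‖y‖ ≤ |g ‖u + y‖ - g ‖y‖| := le_abs_self _
      _ ≤ ρ * |‖u + y‖ - ‖y‖| := hlip (norm_nonneg _) (norm_nonneg _)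
      _ ≤ ρ * ‖u‖ := by
        gcongr
        simpa using abs_norm_sub_norm_le (u + y) y
  rcases eq_or_ne u 0 with rfl | hu
  · exact le_iSup_of_le 0 (by simp)
  -- far out along the ray through `u`, both `‖u + y‖` and `‖y‖` lie in the affine part
  have hu' : 0 < ‖u‖ := norm_pos_iff.2 hu
  set t := (|r| + 1) / ‖u‖
  have ht : 0 ≤ t := by positivity
  have hty : ‖t • u‖ = |r| + 1 := by
    rw [norm_smul, Real.norm_of_nonneg ht, div_mul_cancel₀ _ hu'.ne']
  have htuy : ‖u + t • u‖ = ‖u‖ + (|r| + 1) := by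
    rw [(SameRay.sameRay_nonneg_smul_right u ht).norm_add, hty]
  refine le_iSup_of_le (t • u) (EReal.coe_le_coe_iff.2 (le_of_eq ?_))
  have hr : r < |r| + 1 := by linarith [le_abs_self r]
  rw [htuy, hty, haff _ hr, haff _ (by linarith)]
  ring

lemma coe_mul_add_le_perspR {ρ c : ℝ} (hrec : ∀ u, perspR φ (0, u) = ((ρ * ‖u‖ : ℝ) : EReal))
    (hφ : ∀ v, c + ρ * ‖v‖ ≤ φ v) {τ : ℝ} (hτ : 0 ≤ τ) (u : E) :
    ((τ * c + ρ * ‖u‖ : ℝ) : EReal) ≤ perspR φ (τ, u) := by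
  rcases hτ.eq_or_lt with rfl | hτ
  · simp [hrec]
  rw [perspR_of_pos hτ, EReal.coe_le_coe_iff]
  calc τ * c + ρ * ‖u‖ = τ * (c + ρ * ‖τ⁻¹ • u‖) := by
        rw [norm_smul, Real.norm_of_nonneg (inv_nonneg.2 hτ.le)]
        field_simp
    _ ≤ τ * φ (τ⁻¹ • u) := by gcongr; exact hφ _

lemma coe_le_perspR_objective {ρ c γ σ τ : ℝ} {x u : E} (hγ : 0 ≤ γ)
    (hrec : ∀ u, perspR φ (0, u) = ((ρ * ‖u‖ : ℝ) : EReal)) (hφ : ∀ v, c + ρ * ‖v‖ ≤ φ v)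
    (hτ : 0 ≤ τ) :
    ((γ * ρ * ‖u‖ + ‖x - u‖ ^ 2 / 2 + σ ^ 2 / 2 + τ * (γ * c - σ) + τ ^ 2 / 2 : ℝ) : EReal) ≤
      (γ : EReal) * perspR φ (τ, u) + ((((σ - τ) ^ 2 + ‖x - u‖ ^ 2) / 2 : ℝ) : EReal) := by
  calc _ = ((γ : ℝ) : EReal) * ((τ * c + ρ * ‖u‖ : ℝ) : EReal) +
        ((((σ - τ) ^ 2 + ‖x - u‖ ^ 2) / 2 : ℝ) : EReal) := by
        rw [← EReal.coe_mul, ← EReal.coe_add]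
        ring_nf
    _ ≤ _ := by
        gcongr
        exact coe_mul_add_le_perspR hrec hφ hτ u

end Perspective

section InnerProductSpace

variable {H : Type*} [NormedAddCommGroup H] [InnerProductSpace ℝ H]

def softThreshold (κ : ℝ) (x : H) : H := (1 - κ / ‖x‖) • x

lemma norm_softThreshold {κ : ℝ} {x : H} (hx : x ≠ 0) (hκ : κ ≤ ‖x‖) :
    ‖softThreshold κ x‖ = ‖x‖ - κ := by
  have hx' : 0 < ‖x‖ := norm_pos_iff.2 hx
  rw [softThreshold, norm_smul, Real.norm_of_nonneg (by rw [sub_nonneg, div_le_one hx']; exact hκ)]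
  field_simp

lemma softThreshold_objective_eq {κ : ℝ} {x : H} (hx : x ≠ 0) (hκ : κ ≤ ‖x‖) (u : H) :
    κ * ‖u‖ + ‖x - u‖ ^ 2 / 2 =
      κ * ‖softThreshold κ x‖ + ‖x - softThreshold κ x‖ ^ 2 / 2 +
        ((‖u‖ - ‖softThreshold κ x‖) ^ 2 / 2 + (‖x‖ * ‖u‖ - inner ℝ x u)) := by
  have hx' : 0 < ‖x‖ := norm_pos_iff.2 hx
  have hres : ‖x - softThreshold κ x‖ ^ 2 = κ ^ 2 := by
    rw [softThreshold, sub_smul, one_smul, sub_sub_cancel, norm_smul, Real.norm_eq_abs,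
      abs_div, abs_norm, div_mul_cancel₀ _ hx'.ne', sq_abs]
  rw [norm_softThreshold hx hκ, hres, norm_sub_sq_real]
  ring

lemma softThreshold_objective_le {κ : ℝ} {x : H} (hx : x ≠ 0) (hκ : κ ≤ ‖x‖) (u : H) :
    κ * ‖softThreshold κ x‖ + ‖x - softThreshold κ x‖ ^ 2 / 2 ≤ κ * ‖u‖ + ‖x - u‖ ^ 2 / 2 := by
  rw [softThreshold_objective_eq hx hκ u]
  have := real_inner_le_norm x u
  nlinarith [sq_nonneg (‖u‖ - ‖softThreshold κ x‖)]

lemma eq_softThreshold_of_objective_le {κ : ℝ} {x u : H} (hx : x ≠ 0) (hκ : κ ≤ ‖x‖)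
    (hu : κ * ‖u‖ + ‖x - u‖ ^ 2 / 2 ≤
      κ * ‖softThreshold κ x‖ + ‖x - softThreshold κ x‖ ^ 2 / 2) :
    u = softThreshold κ x := by
  rw [softThreshold_objective_eq hx hκ u] at hu
  have hinner := real_inner_le_norm x u
  have hsq := sq_nonneg (‖u‖ - ‖softThreshold κ x‖)
  have hnorm : ‖u‖ = ‖softThreshold κ x‖ := by nlinarith
  -- equality in Cauchy–Schwarz: `u` is a nonnegative multiple of `x`, with the right norm
  have hcs : ‖u‖ • x = ‖x‖ • u := inner_eq_norm_mul_iff_real.1 (by linarith)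
  have hx' : ‖x‖ ≠ 0 := norm_ne_zero_iff.2 hx
  calc u = ‖x‖⁻¹ • (‖x‖ • u) := by rw [smul_smul, inv_mul_cancel₀ hx', one_smul]
    _ = softThreshold κ x := by
      rw [← hcs, smul_smul, hnorm, norm_softThreshold hx hκ, softThreshold]
      congr 1
      field_simp

theorem isProx_perspR_iff {φ : H → ℝ} {γ ρ c σ : ℝ} {x : H} (hγ : 0 < γ) (hρ : 0 ≤ ρ)
    (hrec : ∀ u, perspR φ (0, u) = ((ρ * ‖u‖ : ℝ) : EReal)) (hφ : ∀ v, c + ρ * ‖v‖ ≤ φ v)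
    (hσ : σ ≤ γ * c) (hx : γ * ρ < ‖x‖) (p : ℝ × H) :
    IsProx (fun w => (γ : EReal) * perspR φ w) (σ, x) p ↔
      p = (0, softThreshold (γ * ρ) x) := by
  have hx₀ : x ≠ 0 := norm_pos_iff.1 ((mul_nonneg hγ.le hρ).trans_lt hx)
  have hmin := softThreshold_objective_le hx₀ hx.le
  set s := softThreshold (γ * ρ) x
  have hopt : (γ : EReal) * perspR φ (0, s) + ((((σ - 0) ^ 2 + ‖x - s‖ ^ 2) / 2 : ℝ) : EReal) =
      ((γ * ρ * ‖s‖ + ‖x - s‖ ^ 2 / 2 + σ ^ 2 / 2 : ℝ) : EReal) := by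
    rw [hrec, ← EReal.coe_mul, ← EReal.coe_add]
    ring_nf
  have hneg : ∀ τ u, τ < 0 →
      (γ : EReal) * perspR φ (τ, u) + ((((σ - τ) ^ 2 + ‖x - u‖ ^ 2) / 2 : ℝ) : EReal) = ⊤ := by
    intro τ u hτ
    rw [perspR_of_neg hτ, EReal.mul_top_of_pos (EReal.coe_pos.2 hγ), EReal.top_add_coe]
  constructor
  · intro hp
    obtain ⟨τ, u⟩ := p
    have hle := hp (0, s)
    dsimp only at hle
    rw [hopt] at hle
    have hτ : 0 ≤ τ := by
      by_contra! hτ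
      rw [hneg τ u hτ] at hle
      exact (EReal.coe_lt_top _).not_ge hle
    have hreal := EReal.coe_le_coe_iff.1 ((coe_le_perspR_objective hγ.le hrec hφ hτ).trans hle)
    have hτ₀ : τ = 0 := by nlinarith [hmin u, mul_nonneg hτ (sub_nonneg.2 hσ)]
    subst hτ₀
    rw [eq_softThreshold_of_objective_le (u := u) hx₀ hx.le (by linarith)]
  · rintro rfl ⟨τ, u⟩
    dsimp only
    rw [hopt]
    rcases lt_or_ge τ 0 with hτ | hτ
    · rw [hneg τ u hτ]
      exact le_top
    · refine le_trans (EReal.coe_le_coe_iff.2 ?_) (coe_le_perspR_objective hγ.le hrec hφ hτ)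
      nlinarith [hmin u, mul_nonneg hτ (sub_nonneg.2 hσ)]

end InnerProductSpace

theorem prox_generalized_huber_shrink_zero_scale_general
    {H : Type*} [NormedAddCommGroup H] [InnerProductSpace ℝ H]
    (α γ ρ q : ℝ) (hγ : 0 < γ) (hρ : 0 < ρ) (hq : 1 < q)
    (qs : ℝ) (hqs : qs = q / (q - 1))
    (φ : H → ℝ)
    (hφ : ∀ v : H, φ v =
      if ‖v‖ ≤ ρ ^ (qs / q) then α + ‖v‖ ^ q / q
      else α - ρ ^ qs / qs + ρ * ‖v‖)
    (σ : ℝ) (x : H)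
    (h1 : σ ≤ γ * (α - ρ ^ qs / qs))
    (h2 : γ * ρ < ‖x‖) :
    ∀ p : ℝ × H,
      IsProx (fun w => (γ : EReal) * perspR φ w) (σ, x) p ↔
        p = ((0 : ℝ), (1 - γ * ρ / ‖x‖) • x) := by
  have hφ' : ∀ v, φ v = huberProfile α ρ q qs ‖v‖ := hφ
  have hrec : ∀ u, perspR φ (0, u) = ((ρ * ‖u‖ : ℝ) : EReal) :=
    perspR_zero_of_radial hφ' hρ.le (abs_huberProfile_sub_le hq hρ hqs)
      (fun _ hs => if_neg hs.not_ge)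
  have haff : ∀ v, α - ρ ^ qs / qs + ρ * ‖v‖ ≤ φ v := fun v =>
    (hφ' v).symm ▸ affine_le_huberProfile hq hρ hqs (norm_nonneg v)
  exact isProx_perspR_iff hγ hρ.le hrec haff h1 h2

/-- Prox of the perspective of the generalized Huber function: shrinkage with
vanishing scale. -/
theorem prox_generalized_huber_shrink_zero_scale
    {H : Type*} [NormedAddCommGroup H] [InnerProductSpace ℝ H] [CompleteSpace H]
    (α γ ρ q : ℝ) (hα : 0 < α) (hγ : 0 < γ) (hρ : 0 < ρ) (hq : 1 < q)
    (qs : ℝ) (hqs : qs = q / (q - 1))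
    (φ : H → ℝ)
    (hφ : ∀ v : H, φ v =
      if ‖v‖ ≤ ρ ^ (qs / q) then α + ‖v‖ ^ q / q
      else α - ρ ^ qs / qs + ρ * ‖v‖)
    (σ : ℝ) (x : H)
    (h1 : σ ≤ γ * (α - ρ ^ qs / qs))
    (h2 : γ * ρ < ‖x‖) :
    ∀ p : ℝ × H,
      IsProx (fun w => (γ : EReal) * perspR φ w) (σ, x) p ↔
        p = ((0 : ℝ), (1 - γ * ρ / ‖x‖) • x) :=
  prox_generalized_huber_shrink_zero_scale_general α γ ρ q hγ hρ hq qs hqs φ hφ σ x h1 h2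
end
end

section
/- Let H be a real Hilbert space, let α > 0, ρ > 0, κ > 0, q > 1, set q* = q/(q−1) and C = {x ∈ H : ‖x‖ ≤ ρ}, and define φ : H → ℝ by φ(x) = α + κ‖x‖ + d_C(x)^q/(q ρ^{q*−1}). Then for all σ ∈ ℝ and x ∈ H the perspective satisfies: φ̃(σ,x) = ασ + κ‖x‖ + (σ/(q ρ^{q*−1}))(‖x‖/σ − ρ)^q if σ > 0 and ‖x‖ > ρσ; φ̃(σ,x) = ασ + κ‖x‖ if σ > 0 and ‖x‖ ≤ ρσ; φ̃(0,0) = 0; and φ̃(σ,x) = +∞ otherwise. -/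
/-!
For `σ > 0` the perspective is `σ φ(x/σ)`, and `d_C(v) = max (‖v‖ - ρ) 0` makes it explicit.
For `σ = 0` and `x ≠ 0`, the increment `φ(x + y) - φ(y)` along the ray through `x` grows like
`‖x‖ (‖y‖ - ρ)^(q-1)` because `q > 1`, so the recession function is `+∞` there.
-/
noncomputable section

open Filter

theorem Metric.infDist_setOf_norm_le {E : Type*} [NormedAddCommGroup E] [NormedSpace ℝ E]
    {ρ : ℝ} (hρ : 0 ≤ ρ) (v : E) :
    Metric.infDist v {y : E | ‖y‖ ≤ ρ} = max (‖v‖ - ρ) 0 := by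
  refine le_antisymm ?_ (max_le ?_ Metric.infDist_nonneg)
  · rcases le_or_gt ‖v‖ ρ with hv | hv
    · exact (Metric.infDist_zero_of_mem (s := {y : E | ‖y‖ ≤ ρ}) hv).trans_le (le_max_right _ _)
    · have hv0 : 0 < ‖v‖ := hρ.trans_lt hv
      have hmem : (ρ / ‖v‖) • v ∈ {y : E | ‖y‖ ≤ ρ} := by
        simp [norm_smul, abs_of_nonneg hρ, hv0.ne']
      calc Metric.infDist v {y : E | ‖y‖ ≤ ρ} ≤ dist v ((ρ / ‖v‖) • v) :=
            Metric.infDist_le_dist_of_mem hmem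
        _ = ‖v‖ - ρ := by
            rw [dist_eq_norm, show v - (ρ / ‖v‖) • v = (1 - ρ / ‖v‖) • v by
              rw [sub_smul, one_smul], norm_smul, Real.norm_eq_abs,
              abs_of_nonneg (sub_nonneg.2 ((div_le_one hv0).2 hv.le))]
            field_simp
        _ ≤ max (‖v‖ - ρ) 0 := le_max_left _ _
  · refine (Metric.le_infDist ⟨0, by simpa using hρ⟩).2 fun y hy => ?_
    calc ‖v‖ - ρ ≤ ‖v‖ - ‖y‖ := by gcongr; exact hy
      _ ≤ dist v y := dist_eq_norm v y ▸ norm_sub_norm_le v y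

theorem Real.mul_rpow_sub_one_le_rpow_sub_rpow {a b q : ℝ} (hb : 0 ≤ b) (hba : b ≤ a)
    (hq : 1 ≤ q) : (a - b) * b ^ (q - 1) ≤ a ^ q - b ^ q := by
  have ha : 0 ≤ a := hb.trans hba
  have hmono : b ^ (q - 1) ≤ a ^ (q - 1) := by gcongr
  have hsplit : ∀ c : ℝ, 0 ≤ c → c ^ q = c * c ^ (q - 1) := fun c hc => by
    rw [← Real.rpow_one_add' hc (by linarith), add_sub_cancel]
  rw [hsplit a ha, hsplit b hb]
  nlinarith [Real.rpow_nonneg hb (q - 1)]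

section Perspective

variable {H : Type*} [NormedAddCommGroup H] [NormedSpace ℝ H] (φ : H → ℝ)

theorem perspR_of_pos_s14 {σ : ℝ} (hσ : 0 < σ) (x : H) :
    perspR φ (σ, x) = ((σ * φ (σ⁻¹ • x) : ℝ) : EReal) :=
  if_pos hσ

theorem perspR_of_neg_s14 {σ : ℝ} (hσ : σ < 0) (x : H) : perspR φ (σ, x) = ⊤ := by
  rw [perspR, if_neg hσ.not_gt, if_neg hσ.ne]

theorem perspR_zero_zero : perspR φ (0, 0) = 0 := by
  simp [perspR]

theorem perspR_zero_eq_top_of_tendsto {x : H} {u : ℝ → H}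
    (hu : Tendsto (fun t => φ (x + u t) - φ (u t)) atTop atTop) : perspR φ (0, x) = ⊤ := by
  rw [perspR, if_neg (lt_irrefl _), if_pos rfl, iSup_eq_top]
  intro b hb
  obtain ⟨M, hbM, -⟩ := EReal.lt_iff_exists_real_btwn.1 hb
  obtain ⟨t, ht⟩ := (hu.eventually_gt_atTop M).exists
  exact ⟨u t, hbM.trans (EReal.coe_lt_coe_iff.2 ht)⟩

end Perspective

theorem tendsto_max_sub_rpow_add_sub_max_sub_rpow {ρ r q : ℝ} (hr : 0 < r) (hq : 1 < q) :
    Tendsto (fun s : ℝ => max (s + r - ρ) 0 ^ q - max (s - ρ) 0 ^ q) atTop atTop := by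
  have hlower : Tendsto (fun s : ℝ => r * (s - ρ) ^ (q - 1)) atTop atTop :=
    ((tendsto_rpow_atTop (by linarith)).comp
      (tendsto_atTop_add_const_right _ (-ρ) tendsto_id)).const_mul_atTop hr
  refine tendsto_atTop_mono' _ ((eventually_ge_atTop ρ).mono fun s hs => ?_) hlower
  dsimp only
  rw [max_eq_left (by linarith), max_eq_left (by linarith)]
  simpa using Real.mul_rpow_sub_one_le_rpow_sub_rpow (sub_nonneg.2 hs)
    (by linarith : s - ρ ≤ s + r - ρ) hq.le

theorem tendsto_berhu_sub_along_ray {H : Type*} [NormedAddCommGroup H] [NormedSpace ℝ H]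
    {φ : H → ℝ} {α κ ρ q c : ℝ} (hc : 0 < c) (hq : 1 < q)
    (hφ : ∀ v, φ v = α + κ * ‖v‖ + max (‖v‖ - ρ) 0 ^ q / c) {x : H} (hx : x ≠ 0) :
    Tendsto (fun t : ℝ => φ (x + (t / ‖x‖) • x) - φ ((t / ‖x‖) • x)) atTop atTop := by
  have hx0 : 0 < ‖x‖ := norm_pos_iff.2 hx
  have hgrowth := tendsto_atTop_add_const_left _ (κ * ‖x‖)
    ((tendsto_max_sub_rpow_add_sub_max_sub_rpow (ρ := ρ) hx0 hq).atTop_div_const hc)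
  refine hgrowth.congr' ((eventually_ge_atTop 0).mono fun t ht => ?_)
  have hnorm : ∀ s : ℝ, 0 ≤ s → ‖(s / ‖x‖) • x‖ = s := fun s hs => by
    rw [norm_smul, Real.norm_of_nonneg (by positivity), div_mul_cancel₀ _ hx0.ne']
  have hshift : x + (t / ‖x‖) • x = ((t + ‖x‖) / ‖x‖) • x := by
    rw [add_div, div_self hx0.ne', add_smul, one_smul, add_comm]
  dsimp only
  rw [hshift, hφ, hφ, hnorm t ht, hnorm _ (by positivity)]
  ring

theorem generalized_berhu_perspective_general
    {H : Type*} [NormedAddCommGroup H] [InnerProductSpace ℝ H]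
    (α ρ κ q : ℝ) (hρ : 0 < ρ) (hq : 1 < q)
    (qs : ℝ)
    (φ : H → ℝ)
    (hφ : ∀ v : H, φ v =
      α + κ * ‖v‖ +
        Metric.infDist v {y : H | ‖y‖ ≤ ρ} ^ q / (q * ρ ^ (qs - 1))) :
    ∀ σ : ℝ, ∀ x : H,
      (0 < σ → ρ * σ < ‖x‖ →
        perspR φ (σ, x) =
          ((α * σ + κ * ‖x‖ + σ / (q * ρ ^ (qs - 1)) * (‖x‖ / σ - ρ) ^ q : ℝ) :
            EReal)) ∧
      (0 < σ → ‖x‖ ≤ ρ * σ →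
        perspR φ (σ, x) = ((α * σ + κ * ‖x‖ : ℝ) : EReal)) ∧
      (σ = 0 → x = 0 → perspR φ (σ, x) = (0 : EReal)) ∧
      (σ < 0 ∨ (σ = 0 ∧ x ≠ 0) → perspR φ (σ, x) = (⊤ : EReal)) := by
  intro σ x
  set c := q * ρ ^ (qs - 1)
  have hc : 0 < c := mul_pos (by linarith) (Real.rpow_pos_of_pos hρ _)
  have hφ' : ∀ v : H, φ v = α + κ * ‖v‖ + max (‖v‖ - ρ) 0 ^ q / c := fun v => by
    rw [hφ, Metric.infDist_setOf_norm_le hρ.le]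
  have hscaled : 0 < σ → σ * φ (σ⁻¹ • x) = α * σ + κ * ‖x‖ + σ / c * max (‖x‖ / σ - ρ) 0 ^ q :=
    fun hσ => by
      rw [hφ', norm_smul, Real.norm_of_nonneg (inv_nonneg.2 hσ.le), inv_mul_eq_div]
      field_simp
  refine ⟨fun hσ hx => ?_, fun hσ hx => ?_, ?_, ?_⟩
  · rw [perspR_of_pos_s14 φ hσ, hscaled hσ, max_eq_left (sub_nonneg.2 ((le_div_iff₀ hσ).2 hx.le))]
  · rw [perspR_of_pos_s14 φ hσ, hscaled hσ, max_eq_right (sub_nonpos.2 ((div_le_iff₀ hσ).2 hx)),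
      Real.zero_rpow (by linarith)]
    simp
  · rintro rfl rfl
    exact perspR_zero_zero φ
  · rintro (hσ | ⟨rfl, hx⟩)
    · exact perspR_of_neg_s14 φ hσ x
    · exact perspR_zero_eq_top_of_tendsto φ (tendsto_berhu_sub_along_ray hc hq hφ' hx)

/-- The perspective of the generalized Berhu function
`φ = α + κ‖·‖ + d_C^q/(qρ^{q*−1})`, `C = {x : ‖x‖ ≤ ρ}`. -/
theorem generalized_berhu_perspective
    {H : Type*} [NormedAddCommGroup H] [InnerProductSpace ℝ H] [CompleteSpace H]
    (α ρ κ q : ℝ) (hα : 0 < α) (hρ : 0 < ρ) (hκ : 0 < κ) (hq : 1 < q)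
    (qs : ℝ) (hqs : qs = q / (q - 1))
    (φ : H → ℝ)
    (hφ : ∀ v : H, φ v =
      α + κ * ‖v‖ +
        Metric.infDist v {y : H | ‖y‖ ≤ ρ} ^ q / (q * ρ ^ (qs - 1))) :
    ∀ σ : ℝ, ∀ x : H,
      (0 < σ → ρ * σ < ‖x‖ →
        perspR φ (σ, x) =
          ((α * σ + κ * ‖x‖ + σ / (q * ρ ^ (qs - 1)) * (‖x‖ / σ - ρ) ^ q : ℝ) :
            EReal)) ∧
      (0 < σ → ‖x‖ ≤ ρ * σ →
        perspR φ (σ, x) = ((α * σ + κ * ‖x‖ : ℝ) : EReal)) ∧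
      (σ = 0 → x = 0 → perspR φ (σ, x) = (0 : EReal)) ∧
      (σ < 0 ∨ (σ = 0 ∧ x ≠ 0) → perspR φ (σ, x) = (⊤ : EReal)) :=
  generalized_berhu_perspective_general α ρ κ q hρ hq qs φ hφ
end
end
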